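/- Type preservation of the CPS translation: if Γ ⊢ e : τ @ μα α / μβ β in λF, then ⟦Γ⟧ ⊢C ⟦e⟧ : (⟦τ⟧ → ⟦μα⟧ → ⟦α⟧) → ⟦μβ⟧ → ⟦β⟧ in λC. -/

import Mathlib

namespace LambdaF

/-! ## Syntax and operational semantics of λF -/

/-- λF expressions.  A constant `const ι n` is the `n`-th constant of base type `ι`. -/
inductive Tm : Type where
  | const : Nat → Nat → Tm
  | var : String → Tm
  | lam : String → Tm → Tm
  | app : Tm → Tm → Tm
  | control : String → Tm → Tm
  | prompt : Tm → Tm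

/-- Values `v ::= c | x | λx.e`. -/
inductive IsVal : Tm → Prop where
  | const (ι n : Nat) : IsVal (.const ι n)
  | var (x : String) : IsVal (.var x)
  | lam (x : String) (e : Tm) : IsVal (.lam x e)

/-- Substitution `e[x := v]`. -/
def subst : Tm → String → Tm → Tm
  | .const ι n, _, _ => .const ι n
  | .var y, x, v => if y = x then v else .var y
  | .lam y e, x, v => if y = x then .lam y e else .lam y (subst e x v)
  | .app e₁ e₂, x, v => .app (subst e₁ x v) (subst e₂ x v)
  | .control k e, x, v => if k = x then .control k e else .control k (subst e x v)
  | .prompt e, x, v => .prompt (subst e x v)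

/-- All variable names occurring in a term (free or bound). -/
def Tm.vars : Tm → List String
  | .const _ _ => []
  | .var y => [y]
  | .lam y e => y :: e.vars
  | .app e₁ e₂ => e₁.vars ++ e₂.vars
  | .control k e => k :: e.vars
  | .prompt e => e.vars

/-- Pure evaluation contexts `F ::= [] | F e | v F`. -/
inductive PCtx : Type where
  | hole : PCtx
  | appL : PCtx → Tm → PCtx
  | appR : Tm → PCtx → PCtx

/-- Plugging an expression into a pure context. -/
def PCtx.plug : PCtx → Tm → Tm
  | .hole, e => e
  | .appL P e₂, e => .app (P.plug e) e₂
  | .appR v P, e => .app v (P.plug e)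

/-- Well-formedness of pure contexts: in `v F`, `v` is a value. -/
inductive PCtx.Wf : PCtx → Prop where
  | hole : PCtx.Wf .hole
  | appL (P : PCtx) (e : Tm) : PCtx.Wf P → PCtx.Wf (.appL P e)
  | appR (v : Tm) (P : PCtx) : IsVal v → PCtx.Wf P → PCtx.Wf (.appR v P)

/-- All variable names occurring in a pure context. -/
def PCtx.vars : PCtx → List String
  | .hole => []
  | .appL P e => P.vars ++ e.vars
  | .appR v P => v.vars ++ P.vars

/-- General evaluation contexts `E ::= [] | E e | v E | ⟨E⟩`. -/
inductive ECtx : Type where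
  | hole : ECtx
  | appL : ECtx → Tm → ECtx
  | appR : Tm → ECtx → ECtx
  | prompt : ECtx → ECtx

/-- Plugging an expression into a general context. -/
def ECtx.plug : ECtx → Tm → Tm
  | .hole, e => e
  | .appL E e₂, e => .app (E.plug e) e₂
  | .appR v E, e => .app v (E.plug e)
  | .prompt E, e => .prompt (E.plug e)

/-- Well-formedness of general contexts: in `v E`, `v` is a value. -/
inductive ECtx.Wf : ECtx → Prop where
  | hole : ECtx.Wf .hole
  | appL (E : ECtx) (e : Tm) : ECtx.Wf E → ECtx.Wf (.appL E e)
  | appR (v : Tm) (E : ECtx) : IsVal v → ECtx.Wf E → ECtx.Wf (.appR v E)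
  | prompt (E : ECtx) : ECtx.Wf E → ECtx.Wf (.prompt E)

/-- Reduction of λF. -/
inductive Step : Tm → Tm → Prop where
  | beta (E : ECtx) (x : String) (e v : Tm) :
      E.Wf → IsVal v →
      Step (E.plug (.app (.lam x e) v)) (E.plug (subst e x v))
  | control (E : ECtx) (P : PCtx) (k : String) (e : Tm) (x : String) :
      E.Wf → P.Wf → x ∉ P.vars →
      Step (E.plug (.prompt (P.plug (.control k e))))
           (E.plug (.prompt (subst e k (.lam x (P.plug (.var x))))))
  | prompt (E : ECtx) (v : Tm) :
      E.Wf → IsVal v →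
      Step (E.plug (.prompt v)) (E.plug v)

/-- Reflexive transitive closure of reduction. -/
def Steps : Tm → Tm → Prop := Relation.ReflTransGen Step

/-! ## Types and the (original) type system of λF -/

mutual
/-- λF expression types `τ ::= ι | (τ₁ → τ₂ @ μα α μβ β)`. -/
inductive Ty : Type where
  | base : Nat → Ty
  | arrow : Ty → Ty → Tr → Ty → Tr → Ty → Ty

/-- λF trail types `μ ::= • | (τ ⇒⟨μ⟩ τ′)`. -/
inductive Tr : Type where
  | empty : Tr
  | cons : Ty → Tr → Ty → Tr
end

/-- `id-cont-type τ μ τ′`. -/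
def IdContType : Ty → Tr → Ty → Prop
  | τ, .empty, τ' => τ = τ'
  | τ, .cons τ₁ μ₁ τ₁', τ' => τ = τ₁ ∧ τ' = τ₁' ∧ μ₁ = .empty

/-- `compatible μ₁ μ₂ μ₃`. -/
inductive Compatible : Tr → Tr → Tr → Prop where
  | empty (μ : Tr) : Compatible .empty μ μ
  | consEmpty (τ₁ : Ty) (μ₁ : Tr) (τ₁' : Ty) :
      Compatible (.cons τ₁ μ₁ τ₁') .empty (.cons τ₁ μ₁ τ₁')
  | consCons (τ₁ : Ty) (μ₁ : Tr) (τ₁' : Ty) (μ₂ μ₃ : Tr) :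
      Compatible μ₂ μ₃ μ₁ →
      Compatible (.cons τ₁ μ₁ τ₁') μ₂ (.cons τ₁ μ₃ τ₁')

/-- Typing contexts. -/
abbrev Ctx := List (String × Ty)

/-- Context lookup (with shadowing). -/
inductive Lookup : Ctx → String → Ty → Prop where
  | here (Γ : Ctx) (x : String) (τ : Ty) : Lookup ((x, τ) :: Γ) x τ
  | there (Γ : Ctx) (x y : String) (τ τ' : Ty) :
      x ≠ y → Lookup Γ x τ → Lookup ((y, τ') :: Γ) x τ

/-- The typing judgment `Γ ⊢ e : τ @ μα α / μβ β` of λF. -/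
inductive HasType : Ctx → Tm → Ty → Tr → Ty → Tr → Ty → Prop where
  | const (Γ : Ctx) (ι n : Nat) (μα : Tr) (α : Ty) :
      HasType Γ (.const ι n) (.base ι) μα α μα α
  | var (Γ : Ctx) (x : String) (τ : Ty) (μα : Tr) (α : Ty) :
      Lookup Γ x τ →
      HasType Γ (.var x) τ μα α μα α
  | abs (Γ : Ctx) (x : String) (e : Tm) (τ₁ τ₂ : Ty) (μα : Tr) (α : Ty)
      (μβ : Tr) (β : Ty) (μγ : Tr) (γ : Ty) :
      HasType ((x, τ₁) :: Γ) e τ₂ μα α μβ β →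
      HasType Γ (.lam x e) (.arrow τ₁ τ₂ μα α μβ β) μγ γ μγ γ
  | app (Γ : Ctx) (e₁ e₂ : Tm) (τ₁ τ₂ : Ty) (μα : Tr) (α : Ty) (μβ : Tr) (β : Ty)
      (μγ : Tr) (γ : Ty) (μδ : Tr) (δ : Ty) :
      HasType Γ e₁ (.arrow τ₁ τ₂ μα α μβ β) μγ γ μδ δ →
      HasType Γ e₂ τ₁ μβ β μγ γ →
      HasType Γ (.app e₁ e₂) τ₂ μα α μδ δ
  | control (Γ : Ctx) (k : String) (e : Tm) (τ τ₁ : Ty) (μ₁ : Tr) (τ₁' : Ty)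
      (μ₂ μ₀ : Tr) (α β γ : Ty) (μi : Tr) (γ' : Ty) (μα μβ : Tr) :
      HasType ((k, .arrow τ τ₁ μ₁ τ₁' μ₂ α) :: Γ) e γ μi γ' .empty β →
      IdContType γ μi γ' →
      Compatible (.cons τ₁ μ₁ τ₁') μ₂ μ₀ →
      Compatible μβ μ₀ μα →
      HasType Γ (.control k e) τ μα α μβ β
  | prompt (Γ : Ctx) (e : Tm) (τ β' : Ty) (μi : Tr) (β'' : Ty) (μα : Tr) (α : Ty) :
      HasType Γ e β' μi β'' .empty τ →
      IdContType β' μi β'' →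
      HasType Γ (.prompt e) τ μα α μα α

/-! ## The target calculus λC -/

/-- λC variables: either a λF source variable, or a generated variable
    identified by a pair of numbers (level, slot). -/
abbrev CVar := Sum String (Nat × Nat)

/-- The generated λC variable at level `n`, slot `i`. -/
def gv (n i : Nat) : CVar := Sum.inr (n, i)

/-- λC expressions, with a unit value `()` and a trail-case construct
    `case t of () → e₁ | k → e₂` (binding `k` in `e₂`). -/
inductive CTm : Type where
  | const : Nat → Nat → CTm
  | cvar : CVar → CTm
  | clam : CVar → CTm → CTm
  | capp : CTm → CTm → CTm
  | unit : CTm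
  | ccase : CTm → CTm → CVar → CTm → CTm

/-- Substitution on λC expressions. -/
def substC : CTm → CVar → CTm → CTm
  | .const ι n, _, _ => .const ι n
  | .cvar y, x, v => if y = x then v else .cvar y
  | .clam y e, x, v => if y = x then .clam y e else .clam y (substC e x v)
  | .capp e₁ e₂, x, v => .capp (substC e₁ x v) (substC e₂ x v)
  | .unit, _, _ => .unit
  | .ccase t e₁ k e₂, x, v =>
      .ccase (substC t x v) (substC e₁ x v) k (if k = x then e₂ else substC e₂ x v)

/-- λC types `σ ::= ι | σ → σ | •`. -/
inductive CTy : Type where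
  | base : Nat → CTy
  | arrow : CTy → CTy → CTy
  | unit : CTy

/-- λC typing contexts. -/
abbrev CCtx := List (CVar × CTy)

/-- λC context lookup (with shadowing). -/
inductive CLookup : CCtx → CVar → CTy → Prop where
  | here (Γ : CCtx) (x : CVar) (σ : CTy) : CLookup ((x, σ) :: Γ) x σ
  | there (Γ : CCtx) (x y : CVar) (σ σ' : CTy) :
      x ≠ y → CLookup Γ x σ → CLookup ((y, σ') :: Γ) x σ

/-- The typing judgment `Γ ⊢C e : σ` of λC.  In the `ccase` rule, the first
    branch is typed under the equality assumption that the scrutinee's type is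
    `•`, and the second branch under the assumptions that `k` has the
    scrutinee's type and that this type is a function type. -/
inductive HasTypeC : CCtx → CTm → CTy → Prop where
  | const (Γ : CCtx) (ι n : Nat) : HasTypeC Γ (.const ι n) (.base ι)
  | var (Γ : CCtx) (x : CVar) (σ : CTy) :
      CLookup Γ x σ → HasTypeC Γ (.cvar x) σ
  | lam (Γ : CCtx) (x : CVar) (e : CTm) (σ₁ σ₂ : CTy) :
      HasTypeC ((x, σ₁) :: Γ) e σ₂ →
      HasTypeC Γ (.clam x e) (.arrow σ₁ σ₂)
  | app (Γ : CCtx) (e₁ e₂ : CTm) (σ₁ σ₂ : CTy) :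
      HasTypeC Γ e₁ (.arrow σ₁ σ₂) → HasTypeC Γ e₂ σ₁ →
      HasTypeC Γ (.capp e₁ e₂) σ₂
  | unit (Γ : CCtx) : HasTypeC Γ .unit .unit
  | ccase (Γ : CCtx) (t e₁ : CTm) (k : CVar) (e₂ : CTm) (σ ρ : CTy) :
      HasTypeC Γ t σ →
      (σ = .unit → HasTypeC Γ e₁ ρ) →
      (∀ σ₁ σ₂, σ = .arrow σ₁ σ₂ → HasTypeC ((k, σ) :: Γ) e₂ ρ) →
      HasTypeC Γ (.ccase t e₁ k e₂) ρ

/-- The identity continuation `k_id = λv.λt. case t of () → v | k → k v ()`. -/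
def kidTm : CTm :=
  .clam (gv 0 13) (.clam (gv 0 14)
    (.ccase (.cvar (gv 0 14)) (.cvar (gv 0 13)) (gv 0 15)
      (.capp (.capp (.cvar (gv 0 15)) (.cvar (gv 0 13))) .unit)))

/-! ## CPS translation of λF types, and the trail operations of λC -/

mutual
/-- CPS translation of λF expression types. -/
def cpsTy : Ty → CTy
  | .base ι => .base ι
  | .arrow τ₁ τ₂ μα α μβ β =>
      .arrow (cpsTy τ₁)
        (.arrow (.arrow (cpsTy τ₂) (.arrow (cpsTr μα) (cpsTy α)))
          (.arrow (cpsTr μβ) (cpsTy β)))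

/-- CPS translation of λF trail types. -/
def cpsTr : Tr → CTy
  | .empty => .unit
  | .cons τ μ τ' => .arrow (cpsTy τ) (.arrow (cpsTr μ) (cpsTy τ'))
end

/-- Size of a trail type. -/
def Tr.size : Tr → Nat
  | .empty => 0
  | .cons _ μ _ => μ.size + 1

/-- The trail-cons operation
    `k :: t = case t of () → k | k′ → λv.λt′. k v (k′ :: t′)`,
    defined by recursion on trail types: `consTm μA μB μC m k t` is the body of
    `k :: t` when `k` expects a trail of type `μA`, `t` has trail type `μB`,
    and the result has trail type `μC` (level `m` is used to generate fresh
    variable names).  In the branches that the trail types rule out, the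
    (dead) recursive occurrence `k′ :: t′` is truncated. -/
def consTm : Tr → Tr → Tr → Nat → CTm → CTm → CTm
  | μA, .cons _ μB' _, .cons _ μC' _, m, k, t =>
      .ccase t k (gv m 10)
        (.clam (gv m 11) (.clam (gv m 12)
          (.capp (.capp k (.cvar (gv m 11)))
            (consTm μB' μC' μA (m + 1) (.cvar (gv m 10)) (.cvar (gv m 12))))))
  | _, _, _, m, k, t =>
      .ccase t k (gv m 10)
        (.clam (gv m 11) (.clam (gv m 12)
          (.capp (.capp k (.cvar (gv m 11))) (.cvar (gv m 12)))))
termination_by μA μB μC _ _ _ => μA.size + μB.size + μC.size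
decreasing_by simp [Tr.size]; omega

/-- The trail-append operation `t @ t′ = case t of () → t′ | k → k :: t′`:
    `appendTm μ₁ μ₂ μ₃ m t t′` is the body of `t @ t′` when `t : μ₁`,
    `t′ : μ₂` and the result has trail type `μ₃`. -/
def appendTm : Tr → Tr → Tr → Nat → CTm → CTm → CTm
  | .empty, _, _, m, t, t' => .ccase t t' (gv m 10) (.cvar (gv m 10))
  | .cons _ μ₁' _, μ₂, μ₃, m, t, t' =>
      .ccase t t' (gv m 10) (consTm μ₁' μ₂ μ₃ (m + 1) (.cvar (gv m 10)) t')

/-! ## The CPS translation of λF expressions, as a relation on typing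
    derivations.  `Cps n Γ e τ μα α μβ β e'` means that the λF expression `e`,
    typed as `Γ ⊢ e : τ @ μα α / μβ β`, CPS-translates to the λC expression
    `e'`.  The number `n` is a level used to generate fresh variable names:
    the translation of a node at level `n` uses the generated variables
    `gv n 0, gv n 1, ...` (`k`, `t`, ...), and subterms are translated at
    higher levels, so no variable capture can occur. -/
inductive Cps : Nat → Ctx → Tm → Ty → Tr → Ty → Tr → Ty → CTm → Prop where
  | const (n : Nat) (Γ : Ctx) (ι c : Nat) (μα : Tr) (α : Ty) :
      Cps n Γ (.const ι c) (.base ι) μα α μα α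
        (.clam (gv n 0) (.clam (gv n 1)
          (.capp (.capp (.cvar (gv n 0)) (.const ι c)) (.cvar (gv n 1)))))
  | var (n : Nat) (Γ : Ctx) (x : String) (τ : Ty) (μα : Tr) (α : Ty) :
      Lookup Γ x τ →
      Cps n Γ (.var x) τ μα α μα α
        (.clam (gv n 0) (.clam (gv n 1)
          (.capp (.capp (.cvar (gv n 0)) (.cvar (Sum.inl x))) (.cvar (gv n 1)))))
  | abs (n : Nat) (Γ : Ctx) (x : String) (e : Tm) (τ₁ τ₂ : Ty) (μα : Tr) (α : Ty)
      (μβ : Tr) (β : Ty) (μγ : Tr) (γ : Ty) (e' : CTm) :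
      Cps (n + 1) ((x, τ₁) :: Γ) e τ₂ μα α μβ β e' →
      Cps n Γ (.lam x e) (.arrow τ₁ τ₂ μα α μβ β) μγ γ μγ γ
        (.clam (gv n 0) (.clam (gv n 1)
          (.capp
            (.capp (.cvar (gv n 0))
              (.clam (Sum.inl x) (.clam (gv n 2) (.clam (gv n 3)
                (.capp (.capp e' (.cvar (gv n 2))) (.cvar (gv n 3)))))))
            (.cvar (gv n 1)))))
  | app (n : Nat) (Γ : Ctx) (e₁ e₂ : Tm) (τ₁ τ₂ : Ty) (μα : Tr) (α : Ty)
      (μβ : Tr) (β : Ty) (μγ : Tr) (γ : Ty) (μδ : Tr) (δ : Ty) (e₁' e₂' : CTm) :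
      Cps (n + 1) Γ e₁ (.arrow τ₁ τ₂ μα α μβ β) μγ γ μδ δ e₁' →
      Cps (n + 2) Γ e₂ τ₁ μβ β μγ γ e₂' →
      Cps n Γ (.app e₁ e₂) τ₂ μα α μδ δ
        (.clam (gv n 0) (.clam (gv n 1)
          (.capp
            (.capp e₁'
              (.clam (gv n 2) (.clam (gv n 3)
                (.capp
                  (.capp e₂'
                    (.clam (gv n 4) (.clam (gv n 5)
                      (.capp
                        (.capp (.capp (.cvar (gv n 2)) (.cvar (gv n 4)))
                          (.cvar (gv n 0)))
                        (.cvar (gv n 5))))))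
                  (.cvar (gv n 3))))))
            (.cvar (gv n 1)))))
  | control (n : Nat) (Γ : Ctx) (k : String) (e : Tm) (τ τ₁ : Ty) (μ₁ : Tr)
      (τ₁' : Ty) (μ₂ μ₀ : Tr) (α β γ : Ty) (μi : Tr) (γ' : Ty) (μα μβ : Tr)
      (e' : CTm) :
      Cps (n + 1) ((k, .arrow τ τ₁ μ₁ τ₁' μ₂ α) :: Γ) e γ μi γ' .empty β e' →
      IdContType γ μi γ' →
      Compatible (.cons τ₁ μ₁ τ₁') μ₂ μ₀ →
      Compatible μβ μ₀ μα →
      Cps n Γ (.control k e) τ μα α μβ β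
        (.clam (gv n 0) (.clam (gv n 1)
          (.capp
            (.capp
              (substC e' (Sum.inl k)
                (.clam (gv n 2) (.clam (gv n 3) (.clam (gv n 4)
                  (.capp (.capp (.cvar (gv n 0)) (.cvar (gv n 2)))
                    (appendTm μβ μ₀ μα n (.cvar (gv n 1))
                      (consTm μ₁ μ₂ μ₀ n (.cvar (gv n 3)) (.cvar (gv n 4)))))))))
              kidTm)
            .unit)))
  | prompt (n : Nat) (Γ : Ctx) (e : Tm) (τ β' : Ty) (μi : Tr) (β'' : Ty)
      (μα : Tr) (α : Ty) (e' : CTm) :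
      Cps (n + 1) Γ e β' μi β'' .empty τ e' →
      IdContType β' μi β'' →
      Cps n Γ (.prompt e) τ μα α μα α
        (.clam (gv n 0) (.clam (gv n 1)
          (.capp (.capp (.cvar (gv n 0)) (.capp (.capp e' kidTm) .unit))
            (.cvar (gv n 1)))))

/-!
The translation is typed by induction on the translation derivation, with the λC context
generalized to any `Δ` that gives every source variable its translated type, so that the
continuation and trail variables bound by the translation can be pushed on top of it.
Values become `λk.λt. k v t`. The trail operations `k :: t` and `t @ t′` are typed by induction
on the `compatible` derivation, whose clauses mirror their recursion.

The only delicate case is control: the body is typed with `k` at its CPS type, and then the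
captured continuation `λx.λk′.λt′. k x (t @ (k′ :: t′))` is substituted for `k`. This is
capture-free because the translation at level `n + 1` binds only source variables, generated
variables of level `> n`, and trail-operation variables (slot `≥ 10`), whereas the only free
variables of the captured continuation are the level-`n` variables `k` and `t`.
-/

@[simp] theorem clookup_cons {Γ : CCtx} {x y : CVar} {σ σ' : CTy} :
    CLookup ((y, σ') :: Γ) x σ ↔ x = y ∧ σ = σ' ∨ x ≠ y ∧ CLookup Γ x σ := by
  constructor
  · rintro (_ | ⟨_, _, _, _, _, hne, h⟩)
    · exact .inl ⟨rfl, rfl⟩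
    · exact .inr ⟨hne, h⟩
  · rintro (⟨rfl, rfl⟩ | ⟨hne, h⟩)
    · exact .here ..
    · exact .there _ _ _ _ _ hne h

theorem HasTypeC.ccase_of_unit {Γ : CCtx} {t e₁ e₂ : CTm} {k : CVar} {ρ : CTy}
    (ht : HasTypeC Γ t .unit) (h₁ : HasTypeC Γ e₁ ρ) : HasTypeC Γ (.ccase t e₁ k e₂) ρ :=
  .ccase _ _ _ _ _ _ _ ht (fun _ => h₁) (fun _ _ h => by cases h)

theorem HasTypeC.ccase_of_arrow {Γ : CCtx} {t e₁ e₂ : CTm} {k : CVar} {σ₁ σ₂ ρ : CTy}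
    (ht : HasTypeC Γ t (.arrow σ₁ σ₂)) (h₂ : HasTypeC ((k, .arrow σ₁ σ₂) :: Γ) e₂ ρ) :
    HasTypeC Γ (.ccase t e₁ k e₂) ρ :=
  .ccase _ _ _ _ _ _ _ ht (fun h => by cases h) (fun _ _ _ => h₂)

def CTm.fv : CTm → List CVar
  | .const _ _ => []
  | .cvar y => [y]
  | .clam y e => e.fv.filter (· ≠ y)
  | .capp a b => a.fv ++ b.fv
  | .unit => []
  | .ccase t e₁ k e₂ => t.fv ++ e₁.fv ++ e₂.fv.filter (· ≠ k)

def CTm.bv : CTm → List CVar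
  | .const _ _ => []
  | .cvar _ => []
  | .clam y e => y :: e.bv
  | .capp a b => a.bv ++ b.bv
  | .unit => []
  | .ccase t e₁ k e₂ => k :: (t.bv ++ e₁.bv ++ e₂.bv)

theorem HasTypeC.mono {Δ : CCtx} {e : CTm} {ρ : CTy} (h : HasTypeC Δ e ρ) {Δ' : CCtx}
    (hΔ : ∀ z ∈ e.fv, ∀ σ, CLookup Δ z σ → CLookup Δ' z σ) : HasTypeC Δ' e ρ := by
  induction h generalizing Δ' with
  | const => exact .const _ _ _
  | var _ x _ hx => exact .var _ _ _ (hΔ x (by simp [CTm.fv]) _ hx)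
  | lam _ x _ _ _ _ ih =>
    refine .lam _ _ _ _ _ (ih fun z hz σ => ?_)
    simp only [clookup_cons]
    exact Or.imp_right fun ⟨hzx, hl⟩ => ⟨hzx, hΔ z (by simp [CTm.fv, hz, hzx]) σ hl⟩
  | app _ _ _ _ _ _ _ ih₁ ih₂ =>
    exact .app _ _ _ _ _ (ih₁ fun z hz => hΔ z (by simp [CTm.fv, hz]))
      (ih₂ fun z hz => hΔ z (by simp [CTm.fv, hz]))
  | unit => exact .unit _
  | ccase _ _ _ k _ _ _ _ _ _ iht ih₁ ih₂ =>
    refine .ccase _ _ _ _ _ _ _ (iht fun z hz => hΔ z (by simp [CTm.fv, hz]))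
      (fun hu => ih₁ hu fun z hz => hΔ z (by simp [CTm.fv, hz]))
      (fun σ₁ σ₂ ha => ih₂ σ₁ σ₂ ha fun z hz σ => ?_)
    simp only [clookup_cons]
    exact Or.imp_right fun ⟨hzk, hl⟩ => ⟨hzk, hΔ z (by simp [CTm.fv, hz, hzk]) σ hl⟩

theorem HasTypeC.weaken {Δ : CCtx} {e : CTm} {ρ : CTy} (h : HasTypeC Δ e ρ) {y : CVar}
    (hy : y ∉ e.fv) (σ : CTy) : HasTypeC ((y, σ) :: Δ) e ρ :=
  h.mono fun _ hz _ hl => .there _ _ _ _ _ (ne_of_mem_of_not_mem hz hy) hl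

theorem HasTypeC.subst {Δ : CCtx} {e : CTm} {ρ : CTy} (h : HasTypeC Δ e ρ) {x : CVar}
    {σ : CTy} {Γ : CCtx} {v : CTm} (hΔ : ∀ z σ', CLookup Δ z σ' → CLookup ((x, σ) :: Γ) z σ')
    (hv : HasTypeC Γ v σ) (hcapture : ∀ b ∈ e.bv, b ∉ v.fv) :
    HasTypeC Γ (substC e x v) ρ := by
  induction h generalizing Γ with
  | const => exact .const _ _ _
  | var _ z _ hz =>
    rcases clookup_cons.1 (hΔ _ _ hz) with ⟨rfl, rfl⟩ | ⟨hzx, hl⟩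
    · simpa [substC] using hv
    · simpa [substC, hzx] using HasTypeC.var _ _ _ hl
  | lam _ b _ _ _ hbody ih =>
    by_cases hbx : b = x
    · subst hbx
      rw [substC, if_pos rfl]
      refine .lam _ _ _ _ _ (hbody.mono fun z _ σ' hl => ?_)
      simp only [clookup_cons] at hl hΔ ⊢
      grind
    · rw [substC, if_neg hbx]
      refine .lam _ _ _ _ _ (ih (fun z σ' hl => ?_) (hv.weaken (hcapture b (by simp [CTm.bv])) _)
        fun b' hb' => hcapture b' (by simp [CTm.bv, hb']))
      simp only [clookup_cons] at hl hΔ ⊢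
      grind
  | app _ _ _ _ _ _ _ ih₁ ih₂ =>
    exact .app _ _ _ _ _ (ih₁ hΔ hv fun b hb => hcapture b (by simp [CTm.bv, hb]))
      (ih₂ hΔ hv fun b hb => hcapture b (by simp [CTm.bv, hb]))
  | unit => exact .unit _
  | ccase _ _ _ k _ _ _ _ _ h₂ iht ih₁ ih₂ =>
    refine .ccase _ _ _ _ _ _ _ (iht hΔ hv fun b hb => hcapture b (by simp [CTm.bv, hb]))
      (fun hu => ih₁ hu hΔ hv fun b hb => hcapture b (by simp [CTm.bv, hb])) ?_
    intro σ₁ σ₂ ha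
    by_cases hkx : k = x
    · subst hkx
      rw [if_pos rfl]
      refine (h₂ σ₁ σ₂ ha).mono fun z _ σ' hl => ?_
      simp only [clookup_cons] at hl hΔ ⊢
      grind
    · rw [if_neg hkx]
      refine ih₂ σ₁ σ₂ ha (fun z σ' hl => ?_) (hv.weaken (hcapture k (by simp [CTm.bv])) _)
        fun b hb => hcapture b (by simp [CTm.bv, hb])
      simp only [clookup_cons] at hl hΔ ⊢
      grind

theorem bv_substC_subset (e : CTm) (x : CVar) (v : CTm) :
    (substC e x v).bv ⊆ e.bv ++ v.bv := by
  induction e with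
  | const | unit => simp [substC, CTm.bv]
  | cvar y => by_cases y = x <;> simp_all [substC, CTm.bv]
  | clam y e ih => by_cases y = x <;> simp_all [substC, CTm.bv]
  | capp e₁ e₂ ih₁ ih₂ =>
    simp only [substC, CTm.bv, List.append_subset] at ih₁ ih₂ ⊢
    grind
  | ccase t e₁ k e₂ iht ih₁ ih₂ =>
    simp only [substC, CTm.bv, List.cons_subset, List.append_subset] at iht ih₁ ih₂ ⊢
    split <;> grind

abbrev contTy (τ : Ty) (μ : Tr) (α : Ty) : CTy :=
  .arrow (cpsTy τ) (.arrow (cpsTr μ) (cpsTy α))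

/- The translation of an expression node uses the generated slots `0, …, 5` of its level; the
trail operations and `kidTm` use the slots `≥ 10`. -/

def IsTrailVarFrom (m : Nat) (x : CVar) : Prop :=
  ∃ p i, m ≤ p ∧ 10 ≤ i ∧ x = gv p i

def IsCpsVarBelow (n : Nat) (x : CVar) : Prop :=
  ∃ p i, p < n ∧ i < 10 ∧ x = gv p i

@[simp] theorem isTrailVarFrom_gv {m p i : Nat} : IsTrailVarFrom m (gv p i) ↔ m ≤ p ∧ 10 ≤ i := by
  simp [IsTrailVarFrom, gv]

@[simp] theorem isCpsVarBelow_gv {n p i : Nat} : IsCpsVarBelow n (gv p i) ↔ p < n ∧ i < 10 := by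
  simp [IsCpsVarBelow, gv]

@[simp] theorem not_isCpsVarBelow_inl {n : Nat} {x : String} : ¬ IsCpsVarBelow n (.inl x) := by
  simp [IsCpsVarBelow, gv]

theorem IsTrailVarFrom.of_succ {m : Nat} {x : CVar} (h : IsTrailVarFrom (m + 1) x) :
    IsTrailVarFrom m x := by
  obtain ⟨p, i, hp, hi, rfl⟩ := h
  exact isTrailVarFrom_gv.2 ⟨by omega, hi⟩

theorem IsCpsVarBelow.succ {n : Nat} {x : CVar} (h : IsCpsVarBelow n x) :
    IsCpsVarBelow (n + 1) x := by
  obtain ⟨p, i, hp, hi, rfl⟩ := h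
  exact isCpsVarBelow_gv.2 ⟨by omega, hi⟩

theorem IsTrailVarFrom.not_isCpsVarBelow {m n : Nat} {x : CVar} (h : IsTrailVarFrom m x) :
    ¬ IsCpsVarBelow n x := by
  rintro ⟨p, i, -, hi, rfl⟩
  obtain ⟨p', i', -, hi', h⟩ := h
  simp only [gv, Sum.inr.injEq, Prod.mk.injEq] at h
  omega

theorem fv_consTm_subset (μA μB μC : Tr) (m : Nat) (k t : CTm) :
    (consTm μA μB μC m k t).fv ⊆ k.fv ++ t.fv := by
  intro v hv
  induction μA, μB, μC, m, k, t using consTm.induct with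
  | case1 _ _ _ _ _ _ _ m k t ih =>
    rw [consTm] at hv
    simp only [CTm.fv, List.mem_append, List.mem_filter, List.mem_singleton,
      decide_eq_true_eq] at hv ih ⊢
    grind
  | case2 _ _ _ _ _ _ hne =>
    rw [consTm.eq_2 _ _ _ _ _ _ hne] at hv
    simp only [CTm.fv, List.mem_append, List.mem_filter, List.mem_singleton,
      decide_eq_true_eq] at hv ⊢
    grind

theorem not_mem_fv_consTm {μA μB μC : Tr} {m : Nat} {x y z : CVar} (hx : z ≠ x) (hy : z ≠ y) :
    z ∉ (consTm μA μB μC m (.cvar x) (.cvar y)).fv := fun hz => by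
  simpa [CTm.fv, hx, hy] using fv_consTm_subset _ _ _ _ _ _ hz

theorem mem_bv_consTm {μA μB μC : Tr} {m : Nat} {k t : CTm} {v : CVar}
    (hv : v ∈ (consTm μA μB μC m k t).bv) : v ∈ k.bv ∨ v ∈ t.bv ∨ IsTrailVarFrom m v := by
  induction μA, μB, μC, m, k, t using consTm.induct with
  | case1 _ _ _ _ _ _ _ m k t ih =>
    rw [consTm] at hv
    simp only [CTm.bv, List.mem_cons, List.mem_append, List.not_mem_nil, or_false] at hv ih
    grind [IsTrailVarFrom.of_succ, isTrailVarFrom_gv]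
  | case2 _ _ _ _ _ _ hne =>
    rw [consTm.eq_2 _ _ _ _ _ _ hne] at hv
    simp only [CTm.bv, List.mem_cons, List.mem_append, List.not_mem_nil, or_false] at hv
    grind [isTrailVarFrom_gv]

theorem fv_appendTm_subset (μ₁ μ₂ μ₃ : Tr) (m : Nat) (t t' : CTm) :
    (appendTm μ₁ μ₂ μ₃ m t t').fv ⊆ t.fv ++ t'.fv := by
  intro v hv
  cases μ₁ with
  | empty =>
    simp only [appendTm, CTm.fv, List.mem_append, List.mem_filter, List.mem_singleton,
      decide_eq_true_eq] at hv ⊢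
    grind
  | cons =>
    simp only [appendTm, CTm.fv, List.mem_append, List.mem_filter, decide_eq_true_eq] at hv ⊢
    rcases hv with (hv | hv) | ⟨hv, hne⟩
    · exact .inl hv
    · exact .inr hv
    · have := fv_consTm_subset _ _ _ _ _ _ hv
      simp only [CTm.fv, List.mem_append, List.mem_singleton] at this
      exact .inr (this.resolve_left hne)

theorem mem_bv_appendTm {μ₁ μ₂ μ₃ : Tr} {m : Nat} {t t' : CTm} {v : CVar}
    (hv : v ∈ (appendTm μ₁ μ₂ μ₃ m t t').bv) : v ∈ t.bv ∨ v ∈ t'.bv ∨ IsTrailVarFrom m v := by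
  cases μ₁ with
  | empty =>
    simp only [appendTm, CTm.bv, List.mem_cons, List.mem_append, List.not_mem_nil, or_false] at hv
    rcases hv with rfl | hv | hv <;> simp_all
  | cons =>
    simp only [appendTm, CTm.bv, List.mem_cons, List.mem_append] at hv
    rcases hv with rfl | (hv | hv) | hv
    · simp
    · exact .inl hv
    · exact .inr (.inl hv)
    · rcases mem_bv_consTm hv with hv | hv | hv
      · simp [CTm.bv] at hv
      · exact .inr (.inl hv)
      · exact .inr (.inr hv.of_succ)

theorem isTrailVarFrom_of_mem_bv_kidTm {v : CVar} (hv : v ∈ kidTm.bv) : IsTrailVarFrom 0 v := by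
  simp only [kidTm, CTm.bv, List.mem_cons, List.mem_append, List.not_mem_nil, or_false] at hv
  rcases hv with rfl | rfl | rfl <;> simp

theorem hasTypeC_kidTm {γ : Ty} {μ : Tr} {γ' : Ty} (h : IdContType γ μ γ') (Γ : CCtx) :
    HasTypeC Γ kidTm (contTy γ μ γ') := by
  cases μ with
  | empty =>
    cases (h : γ = γ')
    exact .lam _ _ _ _ _ (.lam _ _ _ _ _
      (.ccase_of_unit (.var _ _ _ (.here ..)) (.var _ _ _ (by simp [gv]))))
  | cons =>
    obtain ⟨rfl, rfl, rfl⟩ := h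
    exact .lam _ _ _ _ _ (.lam _ _ _ _ _ (.ccase_of_arrow (.var _ _ _ (.here ..))
      (.app _ _ _ _ _ (.app _ _ _ _ _ (.var _ _ _ (.here ..)) (.var _ _ _ (by simp [gv])))
        (.unit _))))

theorem hasTypeC_consTm {τ : Ty} {μ : Tr} {τ' : Ty} {μB μC : Tr}
    (hc : Compatible (.cons τ μ τ') μB μC) {m : Nat} {Γ : CCtx} {k : CVar} {t : CTm}
    (hk : CLookup Γ k (contTy τ μ τ')) (ht : HasTypeC Γ t (cpsTr μB))
    (hfresh : ¬ IsTrailVarFrom m k) :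
    HasTypeC Γ (consTm μ μB μC m (.cvar k) t) (cpsTr μC) := by
  generalize hA : Tr.cons τ μ τ' = μA at hc
  induction hc generalizing τ μ τ' m Γ k t with
  | empty => cases hA
  | consEmpty =>
    cases hA
    rw [consTm.eq_2 _ _ _ _ _ _ (by simp)]
    exact .ccase_of_unit ht (.var _ _ _ hk)
  | consCons τ μ τ' μ₂ μ₃ hc ih =>
    cases hA
    cases μ₂ with
    | empty =>
      cases hc
      rw [consTm.eq_2 _ _ _ _ _ _ (by simp)]
      exact .ccase_of_unit ht (.var _ _ _ hk)
    | cons τa μ₂ τb =>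
      rw [consTm]
      have hne (i : Nat) (hi : 10 ≤ i) : k ≠ gv m i := fun h => hfresh (h ▸ by simpa using hi)
      have hk' : CLookup ((gv m 12, cpsTr μ₃) :: (gv m 11, cpsTy τ) ::
          (gv m 10, contTy τa μ₂ τb) :: Γ) k (contTy τ μ τ') :=
        .there _ _ _ _ _ (hne 12 (by omega)) (.there _ _ _ _ _ (hne 11 (by omega))
          (.there _ _ _ _ _ (hne 10 le_rfl) hk))
      exact .ccase_of_arrow ht (.lam _ _ _ _ _ (.lam _ _ _ _ _ (.app _ _ _ _ _
        (.app _ _ _ _ _ (.var _ _ _ hk') (.var _ _ _ (by simp [gv])))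
        (ih (by simp [gv]) (.var _ _ _ (.here ..)) (by simp) rfl))))

theorem hasTypeC_appendTm {μ₁ μ₂ μ₃ : Tr} (hc : Compatible μ₁ μ₂ μ₃) {m : Nat} {Γ : CCtx}
    {t t' : CTm} (ht : HasTypeC Γ t (cpsTr μ₁)) (ht' : HasTypeC Γ t' (cpsTr μ₂))
    (hfresh : gv m 10 ∉ t'.fv) :
    HasTypeC Γ (appendTm μ₁ μ₂ μ₃ m t t') (cpsTr μ₃) := by
  cases μ₁ with
  | empty =>
    cases hc
    exact .ccase_of_unit ht ht'
  | cons => exact .ccase_of_arrow ht (hasTypeC_consTm hc (.here ..) (ht'.weaken hfresh _) (by simp))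

/-- `λx.λk′.λt′. k x (t @ (k′ :: t′))`, where `k` and `t` are `gv n 0` and `gv n 1`. -/
def capturedCont (n : Nat) (μβ μ₀ μα μ₁ μ₂ : Tr) : CTm :=
  .clam (gv n 2) (.clam (gv n 3) (.clam (gv n 4)
    (.capp (.capp (.cvar (gv n 0)) (.cvar (gv n 2)))
      (appendTm μβ μ₀ μα n (.cvar (gv n 1))
        (consTm μ₁ μ₂ μ₀ n (.cvar (gv n 3)) (.cvar (gv n 4)))))))

theorem fv_capturedCont_subset (n : Nat) (μβ μ₀ μα μ₁ μ₂ : Tr) :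
    (capturedCont n μβ μ₀ μα μ₁ μ₂).fv ⊆ [gv n 0, gv n 1] := by
  intro v hv
  simp only [capturedCont, CTm.fv, List.mem_filter, List.mem_append, List.mem_singleton,
    decide_eq_true_eq] at hv
  have happ := @fv_appendTm_subset μβ μ₀ μα n (.cvar (gv n 1))
    (consTm μ₁ μ₂ μ₀ n (.cvar (gv n 3)) (.cvar (gv n 4))) v
  have hcons := @fv_consTm_subset μ₁ μ₂ μ₀ n (.cvar (gv n 3)) (.cvar (gv n 4)) v
  simp only [CTm.fv, List.mem_append, List.mem_singleton] at happ hcons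
  simp only [List.mem_cons, List.not_mem_nil, or_false]
  grind

theorem not_isCpsVarBelow_of_mem_bv_capturedCont {n : Nat} {μβ μ₀ μα μ₁ μ₂ : Tr} {v : CVar}
    (hv : v ∈ (capturedCont n μβ μ₀ μα μ₁ μ₂).bv) : ¬ IsCpsVarBelow n v := by
  simp only [capturedCont, CTm.bv, List.mem_cons, List.mem_append, List.not_mem_nil, or_false,
    false_or] at hv
  rcases hv with rfl | rfl | rfl | hv
  iterate 3 simp
  rcases mem_bv_appendTm hv with hv | hv | hv
  · simp [CTm.bv] at hv
  · rcases mem_bv_consTm hv with hv | hv | hv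
    · simp [CTm.bv] at hv
    · simp [CTm.bv] at hv
    · exact hv.not_isCpsVarBelow
  · exact hv.not_isCpsVarBelow

theorem hasTypeC_capturedCont {τ τ₁ : Ty} {μ₁ : Tr} {τ₁' : Ty} {μ₂ μ₀ μα μβ : Tr} {α : Ty}
    (hc₁ : Compatible (.cons τ₁ μ₁ τ₁') μ₂ μ₀) (hc₂ : Compatible μβ μ₀ μα) (n : Nat)
    (Δ : CCtx) :
    HasTypeC ((gv n 1, cpsTr μβ) :: (gv n 0, contTy τ μα α) :: Δ)
      (capturedCont n μβ μ₀ μα μ₁ μ₂) (cpsTy (.arrow τ τ₁ μ₁ τ₁' μ₂ α)) :=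
  .lam _ _ _ _ _ (.lam _ _ _ _ _ (.lam _ _ _ _ _
    (.app _ _ _ (cpsTr μα) _
      (.app _ _ _ (cpsTy τ) _ (.var _ _ _ (by simp [gv])) (.var _ _ _ (by simp [gv])))
      (hasTypeC_appendTm hc₂ (.var _ _ _ (by simp [gv]))
        (hasTypeC_consTm hc₁ (by simp [gv]) (.var _ _ _ (.here ..)) (by simp))
        (not_mem_fv_consTm (by simp [gv]) (by simp [gv]))))))

theorem not_isCpsVarBelow_of_mem_bv_cps {n : Nat} {Γ : Ctx} {e : Tm} {τ : Ty} {μα : Tr} {α : Ty}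
    {μβ : Tr} {β : Ty} {e' : CTm} (h : Cps n Γ e τ μα α μβ β e') :
    ∀ v ∈ e'.bv, ¬ IsCpsVarBelow n v := by
  have of_succ {n : Nat} {l : List CVar} (h : ∀ v ∈ l, ¬ IsCpsVarBelow (n + 1) v) :
      ∀ v ∈ l, ¬ IsCpsVarBelow n v := fun v hv hn => h v hv hn.succ
  have kid {n : Nat} : ∀ v ∈ kidTm.bv, ¬ IsCpsVarBelow n v := fun v hv =>
    (isTrailVarFrom_of_mem_bv_kidTm hv).not_isCpsVarBelow
  induction h with
  | const | var => simp [CTm.bv]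
  | abs _ _ _ _ _ _ _ _ _ _ _ _ _ _ ih =>
    simp only [CTm.bv, List.forall_mem_cons, List.forall_mem_append, eq_true (of_succ ih)]
    simp
  | app _ _ _ _ _ _ _ _ _ _ _ _ _ _ _ _ _ _ ih₁ ih₂ =>
    simp only [CTm.bv, List.forall_mem_cons, List.forall_mem_append, eq_true (of_succ ih₁),
      eq_true (of_succ (of_succ ih₂))]
    simp
  | control _ _ _ _ _ _ _ _ _ _ _ _ _ _ _ _ _ _ _ _ _ _ ih =>
    simp only [CTm.bv, List.forall_mem_cons, List.forall_mem_append]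
    refine ⟨by simp, by simp, ⟨fun v hv => ?_, kid⟩, by simp⟩
    rcases List.mem_append.1 (bv_substC_subset _ _ _ hv) with hv | hv
    · exact of_succ ih v hv
    · exact not_isCpsVarBelow_of_mem_bv_capturedCont hv
  | prompt _ _ _ _ _ _ _ _ _ _ _ _ ih =>
    simp only [CTm.bv, List.forall_mem_cons, List.forall_mem_append, eq_true (of_succ ih),
      eq_true kid]
    simp

theorem hasTypeC_control {Δ : CCtx} {n : Nat} {k : String} {e' : CTm} {τ τ₁ : Ty} {μ₁ : Tr}
    {τ₁' : Ty} {μ₂ μ₀ : Tr} {α β γ : Ty} {μi : Tr} {γ' : Ty} {μα μβ : Tr}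
    (hbody : HasTypeC ((.inl k, cpsTy (.arrow τ τ₁ μ₁ τ₁' μ₂ α)) :: (gv n 1, cpsTr μβ) ::
      (gv n 0, contTy τ μα α) :: Δ) e' (.arrow (contTy γ μi γ') (.arrow (cpsTr .empty) (cpsTy β))))
    (hbv : ∀ v ∈ e'.bv, ¬ IsCpsVarBelow (n + 1) v) (hid : IdContType γ μi γ')
    (hc₁ : Compatible (.cons τ₁ μ₁ τ₁') μ₂ μ₀) (hc₂ : Compatible μβ μ₀ μα) :
    HasTypeC Δ
      (.clam (gv n 0) (.clam (gv n 1) (.capp (.capp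
        (substC e' (.inl k) (capturedCont n μβ μ₀ μα μ₁ μ₂)) kidTm) .unit)))
      (.arrow (contTy τ μα α) (.arrow (cpsTr μβ) (cpsTy β))) := by
  refine .lam _ _ _ _ _ (.lam _ _ _ _ _ (.app _ _ _ (cpsTr .empty) _
    (.app _ _ _ (contTy γ μi γ') _
      (hbody.subst (fun _ _ h => h) (hasTypeC_capturedCont hc₁ hc₂ n Δ) ?_)
      (hasTypeC_kidTm hid _)) (.unit _)))
  intro b hb hbV
  apply hbv b hb
  have := fv_capturedCont_subset _ _ _ _ _ _ hbV
  simp only [List.mem_cons, List.not_mem_nil, or_false] at this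
  rcases this with rfl | rfl <;> simp

def Realizes (Δ : CCtx) (Γ : Ctx) : Prop :=
  ∀ x τ, Lookup Γ x τ → CLookup Δ (.inl x) (cpsTy τ)

theorem Realizes.cons_gv {Δ : CCtx} {Γ : Ctx} (h : Realizes Δ Γ) (m i : Nat) (σ : CTy) :
    Realizes ((gv m i, σ) :: Δ) Γ :=
  fun x τ hx => .there _ _ _ _ _ (by simp [gv]) (h x τ hx)

theorem Realizes.cons {Δ : CCtx} {Γ : Ctx} (h : Realizes Δ Γ) (x : String) (τ : Ty) :
    Realizes ((.inl x, cpsTy τ) :: Δ) ((x, τ) :: Γ) := by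
  rintro y σ (_ | ⟨_, _, _, _, _, hne, hy⟩)
  · exact .here ..
  · exact .there _ _ _ _ _ (by simpa using hne) (h y σ hy)

theorem realizes_map (Γ : Ctx) : Realizes (Γ.map fun p => (Sum.inl p.1, cpsTy p.2)) Γ := by
  intro x τ hx
  induction hx with
  | here => exact .here ..
  | there _ _ _ _ _ hne _ ih => exact .there _ _ _ _ _ (by simpa using hne) ih

theorem hasTypeC_return {Δ : CCtx} {n : Nat} {V : CTm} {τ : Ty} {μ : Tr} {α : Ty}
    (hV : HasTypeC ((gv n 1, cpsTr μ) :: (gv n 0, contTy τ μ α) :: Δ) V (cpsTy τ)) :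
    HasTypeC Δ
      (.clam (gv n 0) (.clam (gv n 1) (.capp (.capp (.cvar (gv n 0)) V) (.cvar (gv n 1)))))
      (.arrow (contTy τ μ α) (.arrow (cpsTr μ) (cpsTy α))) :=
  .lam _ _ _ _ _ (.lam _ _ _ _ _ (.app _ _ _ (cpsTr μ) _
    (.app _ _ _ (cpsTy τ) _ (.var _ _ _ (by simp [gv])) hV) (.var _ _ _ (.here ..))))

theorem hasTypeC_cps {n : Nat} {Γ : Ctx} {e : Tm} {τ : Ty} {μα : Tr} {α : Ty} {μβ : Tr}
    {β : Ty} {e' : CTm} (h : Cps n Γ e τ μα α μβ β e') {Δ : CCtx} (hΔ : Realizes Δ Γ) :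
    HasTypeC Δ e' (.arrow (contTy τ μα α) (.arrow (cpsTr μβ) (cpsTy β))) := by
  induction h generalizing Δ with
  | const => exact hasTypeC_return (.const _ _ _)
  | var n _ x _ _ _ hx =>
    exact hasTypeC_return (.var _ _ _ ((hΔ.cons_gv n 0 _).cons_gv n 1 _ x _ hx))
  | abs n _ x _ τ₁ τ₂ μα α μβ β _ _ _ _ ih =>
    refine hasTypeC_return (.lam _ _ _ _ _ (.lam _ _ _ _ _ (.lam _ _ _ _ _
      (.app _ _ _ (cpsTr μβ) _ (.app _ _ _ (contTy τ₂ μα α) _ (ih ?_)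
        (.var _ _ _ (by simp [gv]))) (.var _ _ _ (.here ..))))))
    exact ((((hΔ.cons_gv n 0 _).cons_gv n 1 _).cons x τ₁).cons_gv n 2 _).cons_gv n 3 _
  | app n _ _ _ τ₁ τ₂ μα α μβ β μγ γ μδ _ _ _ _ _ ih₁ ih₂ =>
    refine .lam _ _ _ _ _ (.lam _ _ _ _ _ (.app _ _ _ (cpsTr μδ) _
      (.app _ _ _ (contTy (.arrow τ₁ τ₂ μα α μβ β) μγ γ) _
        (ih₁ ((hΔ.cons_gv n 0 _).cons_gv n 1 _)) ?_) (.var _ _ _ (.here ..))))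
    refine .lam _ _ _ _ _ (.lam _ _ _ _ _ (.app _ _ _ (cpsTr μγ) _
      (.app _ _ _ (contTy τ₁ μβ β) _
        (ih₂ ((((hΔ.cons_gv n 0 _).cons_gv n 1 _).cons_gv n 2 _).cons_gv n 3 _)) ?_)
      (.var _ _ _ (.here ..))))
    exact .lam _ _ _ _ _ (.lam _ _ _ _ _ (.app _ _ _ (cpsTr μβ) _ (.app _ _ _ (contTy τ₂ μα α) _
      (.app _ _ _ (cpsTy τ₁) _ (.var _ _ _ (by simp [gv, cpsTy])) (.var _ _ _ (by simp [gv])))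
      (.var _ _ _ (by simp [gv]))) (.var _ _ _ (.here ..))))
  | control n _ k _ τ τ₁ μ₁ τ₁' μ₂ _ α _ _ _ _ μα μβ _ hcps hid hc₁ hc₂ ih =>
    exact hasTypeC_control (ih (((hΔ.cons_gv n 0 (contTy τ μα α)).cons_gv n 1 (cpsTr μβ)).cons k
      (.arrow τ τ₁ μ₁ τ₁' μ₂ α))) (not_isCpsVarBelow_of_mem_bv_cps hcps) hid hc₁ hc₂
  | prompt n _ _ _ β' μi β'' _ _ _ _ hid ih =>
    exact hasTypeC_return (.app _ _ _ (cpsTr .empty) _ (.app _ _ _ (contTy β' μi β'') _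
      (ih ((hΔ.cons_gv n 0 _).cons_gv n 1 _)) (hasTypeC_kidTm hid _)) (.unit _))

/-- **Type preservation of the CPS translation**: if
    `Γ ⊢ e : τ @ μα α / μβ β` in λF (witnessed by a derivation that
    CPS-translates to `e'`), then
    `⟦Γ⟧ ⊢C ⟦e⟧ : (⟦τ⟧ → ⟦μα⟧ → ⟦α⟧) → ⟦μβ⟧ → ⟦β⟧` in λC. -/
theorem cps_preserves_typing (n : Nat) (Γ : Ctx) (e : Tm) (τ : Ty) (μα : Tr)
    (α : Ty) (μβ : Tr) (β : Ty) (e' : CTm)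
    (h : Cps n Γ e τ μα α μβ β e') :
    HasTypeC (Γ.map fun p => (Sum.inl p.1, cpsTy p.2)) e'
      (.arrow (.arrow (cpsTy τ) (.arrow (cpsTr μα) (cpsTy α)))
        (.arrow (cpsTr μβ) (cpsTy β))) :=
  hasTypeC_cps h (realizes_map Γ)

end LambdaF
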